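/- arXiv:1307.6756 — 2 statements merged into one kernel-verified Lean document; each statement's English description precedes it below -/
import Mathlib

section
/- For all p-dimensional fuzzy numbers u and v, the Hausdorff distance between their supports satisfies H([u]_0, [v]_0) ≤ D(u,v), where D is the sendograph metric. -/
open Metric Set

/-- A `p`-dimensional fuzzy number. -/
structure FuzzyNumber (p : ℕ) where
  u : EuclideanSpace ℝ (Fin p) → ℝ
  mem_Icc : ∀ x, u x ∈ Set.Icc (0:ℝ) 1

namespace FuzzyNumber

variable {p : ℕ}

/-- The α-cut of a fuzzy number. -/
def cut (u : FuzzyNumber p) (α : ℝ) : Set (EuclideanSpace ℝ (Fin p)) :=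
  if α = 0 then closure {x | 0 < u.u x} else {x | α ≤ u.u x}

/-- The defining conditions on cuts of a fuzzy number. -/
def IsFuzzyNumber (u : FuzzyNumber p) : Prop :=
  ∀ α ∈ Set.Icc (0:ℝ) 1, (u.cut α).Nonempty ∧ IsCompact (u.cut α) ∧ Convex ℝ (u.cut α)

/-- `ℝ^{p+1}` with the Euclidean metric, as the product of `ℝ^p` and `ℝ`. -/
abbrev E1 (p : ℕ) := WithLp 2 (EuclideanSpace ℝ (Fin p) × ℝ)

noncomputable def pair (x : EuclideanSpace ℝ (Fin p)) (β : ℝ) : E1 p :=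
  (WithLp.equiv 2 (EuclideanSpace ℝ (Fin p) × ℝ)).symm (x, β)

/-- The sendograph. -/
def send (u : FuzzyNumber p) : Set (E1 p) :=
  {z | ((WithLp.equiv 2 _) z).1 ∈ u.cut 0 ∧ ((WithLp.equiv 2 _) z).2 ∈ Set.Icc (0:ℝ) 1 ∧
    ((WithLp.equiv 2 _) z).2 ≤ u.u ((WithLp.equiv 2 _) z).1}

/-- The endograph. -/
def endo (u : FuzzyNumber p) : Set (E1 p) :=
  {z | ((WithLp.equiv 2 _) z).2 ∈ Set.Icc (0:ℝ) 1 ∧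
    ((WithLp.equiv 2 _) z).2 ≤ u.u ((WithLp.equiv 2 _) z).1}

/-- The sendograph metric. -/
noncomputable def D (u v : FuzzyNumber p) : ℝ := hausdorffDist u.send v.send

/-- The endograph metric. -/
noncomputable def Gamma (u v : FuzzyNumber p) : ℝ := hausdorffDist u.endo v.endo

/-- The supremum metric. -/
noncomputable def dSup (u v : FuzzyNumber p) : ℝ :=
  ⨆ α : Set.Icc (0:ℝ) 1, hausdorffDist (u.cut α) (v.cut α)

/-- The `L_q`-type metric. -/
noncomputable def dq (q : ℝ) (u v : FuzzyNumber p) : ℝ :=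
  (∫ α in (0:ℝ)..1, (hausdorffDist (u.cut α) (v.cut α)) ^ q) ^ (1/q)

end FuzzyNumber

/-! The projection `(x, β) ↦ x` is `1`-Lipschitz on `ℝ^{p+1}` and maps `send u` onto `[u]_0`,
since `(x, 0) ∈ send u` for every `x ∈ [u]_0`; a `1`-Lipschitz map does not increase Hausdorff
distances. The sendographs are nonempty and bounded, so their extended Hausdorff distance is
finite and `D u v` is not the junk value `0` that `hausdorffDist` takes at `∞`. -/

open scoped ENNReal

namespace LipschitzWith

variable {α β : Type*}

section PseudoEMetricSpace

variable [PseudoEMetricSpace α] [PseudoEMetricSpace β] {f : α → β}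

theorem infEDist_image_le (hf : LipschitzWith 1 f) (x : α) (s : Set α) :
    infEDist (f x) (f '' s) ≤ infEDist x s :=
  le_infEDist.2 fun y hy =>
    (infEDist_le_edist_of_mem (mem_image_of_mem f hy)).trans (by simpa using hf x y)

theorem hausdorffEDist_image_le (hf : LipschitzWith 1 f) (s t : Set α) :
    hausdorffEDist (f '' s) (f '' t) ≤ hausdorffEDist s t := by
  refine hausdorffEDist_le_of_infEDist ?_ ?_
  · rintro _ ⟨x, hx, rfl⟩
    exact (hf.infEDist_image_le x t).trans (infEDist_le_hausdorffEDist_of_mem hx)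
  · rintro _ ⟨x, hx, rfl⟩
    rw [hausdorffEDist_comm]
    exact (hf.infEDist_image_le x s).trans (infEDist_le_hausdorffEDist_of_mem hx)

end PseudoEMetricSpace

theorem hausdorffDist_image_le [PseudoMetricSpace α] [PseudoMetricSpace β] {f : α → β}
    (hf : LipschitzWith 1 f) {s t : Set α} (hst : hausdorffEDist s t ≠ ∞) :
    hausdorffDist (f '' s) (f '' t) ≤ hausdorffDist s t :=
  ENNReal.toReal_mono hst (hf.hausdorffEDist_image_le s t)

end LipschitzWith

namespace FuzzyNumber

variable {p : ℕ}

theorem lipschitzWith_fst : LipschitzWith 1 (WithLp.fst : E1 p → EuclideanSpace ℝ (Fin p)) :=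
  LipschitzWith.of_edist_le WithLp.edist_fst_le

theorem fst_image_send (u : FuzzyNumber p) : WithLp.fst '' u.send = u.cut 0 := by
  refine Subset.antisymm ?_ fun x hx => ?_
  · rintro _ ⟨z, hz, rfl⟩
    exact hz.1
  · exact ⟨pair x 0, ⟨hx, ⟨le_rfl, zero_le_one⟩, (u.mem_Icc x).1⟩, rfl⟩

theorem send_subset_preimage_prod (u : FuzzyNumber p) :
    u.send ⊆ WithLp.ofLp ⁻¹' (u.cut 0 ×ˢ Icc 0 1) :=
  fun _ hz => ⟨hz.1, hz.2.1⟩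

theorem isBounded_send {u : FuzzyNumber p} (hu : Bornology.IsBounded (u.cut 0)) :
    Bornology.IsBounded u.send :=
  ((WithLp.prod_antilipschitzWith_ofLp 2 _ _).isBounded_preimage
    (hu.prod (isBounded_Icc 0 1))).subset u.send_subset_preimage_prod

theorem hausdorffEDist_send_ne_top {u v : FuzzyNumber p} (hu : u.IsFuzzyNumber)
    (hv : v.IsFuzzyNumber) : hausdorffEDist u.send v.send ≠ ∞ := by
  have h0 : (0 : ℝ) ∈ Icc (0 : ℝ) 1 := ⟨le_rfl, zero_le_one⟩
  obtain ⟨hu_ne, hu_cpt, -⟩ := hu 0 h0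
  obtain ⟨hv_ne, hv_cpt, -⟩ := hv 0 h0
  rw [← fst_image_send] at hu_ne hv_ne
  exact hausdorffEDist_ne_top_of_nonempty_of_bounded hu_ne.of_image hv_ne.of_image
    (isBounded_send hu_cpt.isBounded) (isBounded_send hv_cpt.isBounded)

end FuzzyNumber

theorem hausdorffDist_support_le_D (p : ℕ) (u v : FuzzyNumber p)
    (hu : u.IsFuzzyNumber) (hv : v.IsFuzzyNumber) :
    hausdorffDist (u.cut 0) (v.cut 0) ≤ FuzzyNumber.D u v := by
  rw [← FuzzyNumber.fst_image_send u, ← FuzzyNumber.fst_image_send v]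
  exact FuzzyNumber.lipschitzWith_fst.hausdorffDist_image_le
    (FuzzyNumber.hausdorffEDist_send_ne_top hu hv)
end

section
/- Let u_m (m ∈ ℕ) and u be p-dimensional fuzzy numbers. If D(u_m, u) → 0 in the sendograph metric, then d_q(u_m, u) → 0 for every q ≥ 1, where d_q is the L_q-type metric. -/
open Metric Set

/-! If `D v w < r`, every point `(x, α)` of the sendograph of `v` is `r`-close to a point `(y, β)`
of the sendograph of `w` with `β > α - r`, so `[v]_α` lies in the `r`-thickening of `[w]_(α - r)`,
and symmetrically `[w]_(α + r)` lies in the `r`-thickening of `[v]_α`. Hence `D(u_m, u) → 0` forces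
`H([u_m]_α, [u]_α) → 0` at every level `α ∈ (0, 1)` at which the decreasing family of compact cuts
of `u` is Hausdorff-continuous, which is all but countably many levels. The same continuity makes
the integrands measurable, they are bounded by `(diam [u]_0 + 2) ^ q` once `D < 1`, and dominated
convergence gives `d_q(u_m, u) → 0`. -/

open Filter Topology MeasureTheory

section HausdorffDist

variable {X : Type*} [PseudoMetricSpace X]

theorem Metric.hausdorffDist_le_of_subset_thickening {s t : Set X} {r : ℝ} (hr : 0 ≤ r)
    (hs : s ⊆ thickening r t) (ht : t ⊆ thickening r s) : hausdorffDist s t ≤ r :=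
  hausdorffDist_le_of_mem_dist hr
    (fun _ hx ↦ (mem_thickening_iff.1 (hs hx)).imp fun _ ⟨hy, h⟩ ↦ ⟨hy, h.le⟩)
    (fun _ hx ↦ (mem_thickening_iff.1 (ht hx)).imp fun _ ⟨hy, h⟩ ↦ ⟨hy, h.le⟩)

theorem Metric.abs_hausdorffDist_sub_hausdorffDist_le {s s' t t' : Set X}
    (hs : hausdorffEDist s s' ≠ ⊤) (hst : hausdorffEDist s t ≠ ⊤)
    (hst' : hausdorffEDist s' t' ≠ ⊤) :
    |hausdorffDist s t - hausdorffDist s' t'| ≤ hausdorffDist s s' + hausdorffDist t t' := by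
  have h₁ := hausdorffDist_triangle (u := t) hs
  have h₂ := hausdorffDist_triangle (u := t) hst'
  have h₃ := hausdorffDist_triangle (u := t') hst
  have h₄ := hausdorffDist_triangle (s := s') (u := t') (hausdorffEDist_comm.trans_ne hs)
  rw [hausdorffDist_comm (s := t')] at h₂
  rw [hausdorffDist_comm (s := s') (t := s)] at h₄
  rw [abs_le]
  constructor <;> linarith

end HausdorffDist

theorem MeasureTheory.aestronglyMeasurable_of_ae_continuousAt {α β : Type*} [TopologicalSpace α]
    [MeasurableSpace α] [OpensMeasurableSpace α] [TopologicalSpace β]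
    [TopologicalSpace.PseudoMetrizableSpace β] [SecondCountableTopologyEither α β]
    {μ : Measure α} {f : α → β} (hf : ∀ᵐ x ∂μ, ContinuousAt f x) :
    AEStronglyMeasurable f μ := by
  rw [← Measure.restrict_eq_self_of_ae_mem hf]
  exact ContinuousOn.aestronglyMeasurable (fun _ hx ↦ ContinuousAt.continuousWithinAt hx)
    (IsGδ.setOfPred_continuousAt f).measurableSet

theorem IsCompact.finite_of_pairwise_le_dist {X ι : Type*} [PseudoMetricSpace X] {K : Set X}
    (hK : IsCompact K) {s : Set ι} {x : ι → X} (hxK : MapsTo x s K) {r : ℝ} (hr : 0 < r)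
    (hsep : s.Pairwise fun a b ↦ r ≤ dist (x a) (x b)) : s.Finite := by
  rcases s.eq_empty_or_nonempty with rfl | ⟨a, ha⟩
  · exact finite_empty
  have : Nonempty X := ⟨x a⟩
  obtain ⟨t, -, htf, hcov⟩ := hK.finite_cover_balls (half_pos hr)
  have hcenter : ∀ a ∈ s, ∃ c ∈ t, x a ∈ ball c (r / 2) := fun a ha ↦ by
    simpa using mem_iUnion₂.1 (hcov (hxK ha))
  choose! c hct hcx using hcenter
  refine Finite.of_finite_image (htf.subset (image_subset_iff.2 hct)) fun a ha b hb hab ↦ ?_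
  by_contra hne
  have h₁ := mem_ball.1 (hcx a ha)
  have h₂ := mem_ball'.1 (hcx b hb)
  rw [hab] at h₁
  linarith [hsep ha hb hne, dist_triangle (x a) (c b) (x b)]

namespace FuzzyNumber

variable {p : ℕ} {v w : FuzzyNumber p} {x : EuclideanSpace ℝ (Fin p)} {α β ε r : ℝ}

theorem mem_cut_of_ne_zero (hα : α ≠ 0) : x ∈ w.cut α ↔ α ≤ w.u x := by
  simp [cut, hα]

theorem cut_antitoneOn (w : FuzzyNumber p) : AntitoneOn w.cut (Ici 0) := by
  intro a ha b hb hab x hx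
  rcases (mem_Ici.1 ha).eq_or_lt with rfl | ha
  · rcases (mem_Ici.1 hb).eq_or_lt with rfl | hb
    · exact hx
    · rw [cut, if_pos rfl]
      exact subset_closure (hb.trans_le ((mem_cut_of_ne_zero hb.ne').1 hx))
  · rw [mem_cut_of_ne_zero ha.ne']
    exact hab.trans ((mem_cut_of_ne_zero (ha.trans_le hab).ne').1 hx)

theorem cut_subset_cut_zero (hα : 0 ≤ α) : w.cut α ⊆ w.cut 0 :=
  w.cut_antitoneOn self_mem_Ici hα hα

theorem le_of_mem_cut (hα : 0 ≤ α) (hx : x ∈ w.cut α) : α ≤ w.u x := by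
  rcases hα.eq_or_lt with rfl | hα
  · exact (w.mem_Icc x).1
  · exact (mem_cut_of_ne_zero hα.ne').1 hx

theorem isCompact_cut (hw : w.IsFuzzyNumber) (hα : α ∈ Icc 0 1) : IsCompact (w.cut α) :=
  (hw α hα).2.1

theorem hausdorffEDist_cut_ne_top (hv : v.IsFuzzyNumber) (hw : w.IsFuzzyNumber)
    (hα : α ∈ Icc 0 1) (hβ : β ∈ Icc 0 1) : hausdorffEDist (v.cut α) (w.cut β) ≠ ⊤ :=
  hausdorffEDist_ne_top_of_nonempty_of_bounded (hv α hα).1 (hw β hβ).1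
    (isCompact_cut hv hα).isBounded (isCompact_cut hw hβ).isBounded

theorem pair_mem_send (hx : x ∈ w.cut α) (hα : α ∈ Icc 0 1) : pair x α ∈ w.send :=
  ⟨cut_subset_cut_zero hα.1 hx, hα, le_of_mem_cut hα.1 hx⟩

theorem fst_mem_cut_of_mem_send {z : E1 p} (hz : z ∈ w.send) (hβ : 0 ≤ β) (hβz : β ≤ z.snd) :
    z.fst ∈ w.cut β := by
  rcases hβ.eq_or_lt with rfl | hβ
  · exact hz.1
  · exact (mem_cut_of_ne_zero hβ.ne').2 (hβz.trans hz.2.2)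

theorem isBounded_send_s11 (hw : w.IsFuzzyNumber) : Bornology.IsBounded w.send := by
  refine ((WithLp.prod_antilipschitzWith_ofLp 2 _ _).isBounded_preimage
    ((isCompact_cut hw (left_mem_Icc.2 zero_le_one)).isBounded.prod (isBounded_Icc 0 1))).subset ?_
  exact fun _ hz ↦ ⟨hz.1, hz.2.1⟩

theorem send_nonempty (hw : w.IsFuzzyNumber) : w.send.Nonempty :=
  let ⟨_, hx⟩ := (hw 0 (left_mem_Icc.2 zero_le_one)).1
  ⟨_, pair_mem_send hx (left_mem_Icc.2 zero_le_one)⟩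

theorem hausdorffEDist_send_ne_top_s11 (hv : v.IsFuzzyNumber) (hw : w.IsFuzzyNumber) :
    hausdorffEDist v.send w.send ≠ ⊤ :=
  hausdorffEDist_ne_top_of_nonempty_of_bounded (send_nonempty hv) (send_nonempty hw)
    (isBounded_send_s11 hv) (isBounded_send_s11 hw)

theorem D_comm (v w : FuzzyNumber p) : D v w = D w v :=
  hausdorffDist_comm

theorem exists_mem_send_of_D_lt (hv : v.IsFuzzyNumber) (hw : w.IsFuzzyNumber) (hD : D v w < r)
    (hα : α ∈ Icc 0 1) (hx : x ∈ v.cut α) :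
    ∃ z ∈ w.send, dist x z.fst < r ∧ α - r < z.snd := by
  obtain ⟨z, hz, hd⟩ :=
    exists_dist_lt_of_hausdorffDist_lt (pair_mem_send hx hα) hD (hausdorffEDist_send_ne_top_s11 hv hw)
  have hsnd : α - z.snd < r := (abs_lt.1 ((WithLp.dist_snd_le (pair x α) z).trans_lt hd)).2
  exact ⟨z, hz, (WithLp.dist_fst_le _ _).trans_lt hd, by linarith⟩

theorem cut_subset_thickening_cut_zero_of_D_lt (hv : v.IsFuzzyNumber) (hw : w.IsFuzzyNumber)
    (hD : D v w < r) (hα : α ∈ Icc 0 1) : v.cut α ⊆ thickening r (w.cut 0) := fun _ hx ↦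
  let ⟨z, hz, hd, _⟩ := exists_mem_send_of_D_lt hv hw hD hα hx
  mem_thickening_iff.2 ⟨z.fst, hz.1, hd⟩

theorem cut_subset_thickening_cut_of_D_lt (hv : v.IsFuzzyNumber) (hw : w.IsFuzzyNumber)
    (hD : D v w < r) (hα : α ∈ Icc 0 1) (hβ : 0 ≤ β) (hβα : β ≤ α - r) :
    v.cut α ⊆ thickening r (w.cut β) := fun _ hx ↦
  let ⟨z, hz, hd, hsnd⟩ := exists_mem_send_of_D_lt hv hw hD hα hx
  mem_thickening_iff.2 ⟨z.fst, fst_mem_cut_of_mem_send hz hβ (by linarith), hd⟩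

theorem hausdorffDist_cut_le_of_D_lt (hv : v.IsFuzzyNumber) (hw : w.IsFuzzyNumber)
    (hD : D v w < r) (hα : α ∈ Icc 0 1) :
    hausdorffDist (v.cut α) (w.cut α) ≤ diam (w.cut 0) + 2 * r := by
  have hK := isCompact_cut hw (left_mem_Icc.2 zero_le_one)
  have hr : 0 < r := hausdorffDist_nonneg.trans_lt hD
  have hsub : v.cut α ∪ w.cut α ⊆ thickening r (w.cut 0) :=
    union_subset (cut_subset_thickening_cut_zero_of_D_lt hv hw hD hα)
      ((cut_subset_cut_zero hα.1).trans (self_subset_thickening hr _))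
  calc hausdorffDist (v.cut α) (w.cut α) ≤ diam (v.cut α ∪ w.cut α) :=
        hausdorffDist_le_diam (hv α hα).1 (isCompact_cut hv hα).isBounded (hw α hα).1
          (isCompact_cut hw hα).isBounded
    _ ≤ diam (thickening r (w.cut 0)) := diam_mono hsub hK.isBounded.thickening
    _ ≤ diam (w.cut 0) + 2 * r := diam_thickening_le _ hr.le

/-- The levels at which `γ ↦ w.cut γ` is not Hausdorff-continuous from the right. -/
def jumpLevels (w : FuzzyNumber p) : Set ℝ :=
  {α | ¬ w.cut α ⊆ closure {x | α < w.u x}}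

theorem countable_jumpLevels (hw : w.IsFuzzyNumber) : w.jumpLevels.Countable := by
  have hsub : w.jumpLevels ⊆ ⋃ n : ℕ,
      {α | 0 < α ∧ ∃ x ∈ w.cut α, ∀ y, α < w.u y → 1 / (n + 1 : ℝ) ≤ dist x y} := by
    intro α hα
    have hα₀ : 0 < α := by
      by_contra! hα₀
      apply hα
      rcases hα₀.eq_or_lt with rfl | hα₀
      · rw [cut, if_pos rfl]
      · exact fun x _ ↦ subset_closure (hα₀.trans_le (w.mem_Icc x).1)
    obtain ⟨x, hx, hxc⟩ := not_subset.1 hα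
    obtain ⟨δ, hδ, hfar⟩ : ∃ δ > 0, ∀ y, α < w.u y → δ ≤ dist x y := by
      simpa [Metric.mem_closure_iff] using hxc
    obtain ⟨n, hn⟩ := exists_nat_one_div_lt hδ
    exact mem_iUnion.2 ⟨n, hα₀, x, hx, fun y hy ↦ hn.le.trans (hfar y hy)⟩
  refine Countable.mono hsub (countable_iUnion fun n ↦ Finite.countable ?_)
  -- For levels `a < b`, the witness at `b` lies in `{a < w.u}`, hence far from the one at `a`.
  choose! x hx hfar using fun α (hα : α ∈ {α | 0 < α ∧
    ∃ x ∈ w.cut α, ∀ y, α < w.u y → 1 / (n + 1 : ℝ) ≤ dist x y}) ↦ hα.2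
  refine (isCompact_cut hw (left_mem_Icc.2 zero_le_one)).finite_of_pairwise_le_dist
    (fun α hα ↦ cut_subset_cut_zero hα.1.le (hx α hα)) (Nat.one_div_pos_of_nat (n := n))
    fun a ha b hb hab ↦ ?_
  rcases hab.lt_or_gt with h | h
  · exact hfar a ha _ (h.trans_le (le_of_mem_cut hb.1.le (hx b hb)))
  · rw [dist_comm]
    exact hfar b hb _ (h.trans_le (le_of_mem_cut ha.1.le (hx a ha)))

theorem exists_cut_lt_subset_thickening_cut (hw : w.IsFuzzyNumber) (hα : α ∈ Ioc 0 1)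
    (hε : 0 < ε) : ∃ β ∈ Ioo 0 α, w.cut β ⊆ thickening ε (w.cut α) := by
  have : Nonempty (Ioo 0 α) := (nonempty_Ioo.2 hα.1).to_subtype
  have hmem : ∀ β : Ioo 0 α, (β : ℝ) ∈ Icc 0 1 := fun β ↦ ⟨β.2.1.le, β.2.2.le.trans hα.2⟩
  have hInter : ⋂ β : Ioo 0 α, w.cut β = w.cut α := by
    ext x
    simp only [mem_iInter, mem_cut_of_ne_zero hα.1.ne']
    refine ⟨fun h ↦ le_of_not_gt fun hlt ↦ ?_, fun h β ↦ ?_⟩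
    · have hux := (w.mem_Icc x).1
      have hβ : (w.u x + α) / 2 ∈ Ioo 0 α := by constructor <;> linarith
      linarith [(mem_cut_of_ne_zero hβ.1.ne').1 (h ⟨_, hβ⟩)]
    · exact (mem_cut_of_ne_zero β.2.1.ne').2 (β.2.2.le.trans h)
  obtain ⟨β, hβ⟩ := exists_subset_nhds_of_isCompact' (V := fun β : Ioo 0 α ↦ w.cut β)
    (Antitone.directed_ge fun a b hab ↦ w.cut_antitoneOn a.2.1.le b.2.1.le hab)
    (fun β ↦ isCompact_cut hw (hmem β)) (fun β ↦ (isCompact_cut hw (hmem β)).isClosed)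
    fun x hx ↦ isOpen_thickening.mem_nhds (self_subset_thickening hε _ (hInter ▸ hx))
  exact ⟨β, β.2, hβ⟩

theorem exists_cut_subset_thickening_cut_gt (hw : w.IsFuzzyNumber) (hα : α ∈ Ioo 0 1)
    (hj : α ∉ w.jumpLevels) (hε : 0 < ε) : ∃ β ∈ Ioc α 1, w.cut α ⊆ thickening ε (w.cut β) := by
  have : Nonempty (Ioc α 1) := ⟨⟨1, hα.2, le_rfl⟩⟩
  have hcover : {x | α < w.u x} ⊆ ⋃ β : Ioc α 1, w.cut β := fun x hx ↦
    mem_iUnion.2 ⟨⟨w.u x, hx, (w.mem_Icc x).2⟩, (mem_cut_of_ne_zero (hα.1.trans hx).ne').2 le_rfl⟩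
  have hsub : w.cut α ⊆ ⋃ β : Ioc α 1, thickening ε (w.cut β) := calc
    w.cut α ⊆ closure {x | α < w.u x} := not_not.1 hj
    _ ⊆ thickening ε {x | α < w.u x} := closure_subset_thickening hε _
    _ ⊆ thickening ε (⋃ β : Ioc α 1, w.cut β) := thickening_subset_of_subset ε hcover
    _ = ⋃ β : Ioc α 1, thickening ε (w.cut β) := thickening_iUnion ε _
  obtain ⟨β, hβ⟩ := (isCompact_cut hw (Ioo_subset_Icc_self hα)).elim_directed_cover _
    (fun _ ↦ isOpen_thickening) hsub (Antitone.directed_le fun a b hab ↦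
      thickening_subset_of_subset ε (w.cut_antitoneOn (hα.1.trans a.2.1).le
        (hα.1.trans b.2.1).le hab))
  exact ⟨β, β.2, hβ⟩

theorem exists_forall_cut_subset_thickening (hw : w.IsFuzzyNumber) (hα : α ∈ Ioo 0 1)
    (hj : α ∉ w.jumpLevels) (hε : 0 < ε) :
    ∃ η ∈ Ioo 0 α, α + η ≤ 1 ∧ ∀ γ, |γ - α| ≤ η →
      w.cut γ ⊆ thickening ε (w.cut α) ∧ w.cut α ⊆ thickening ε (w.cut γ) := by
  obtain ⟨β₁, hβ₁, h₁⟩ := exists_cut_lt_subset_thickening_cut hw (Ioo_subset_Ioc_self hα) hε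
  obtain ⟨β₂, hβ₂, h₂⟩ := exists_cut_subset_thickening_cut_gt hw hα hj hε
  have hη₁ := min_le_left (α - β₁) (β₂ - α)
  have hη₂ := min_le_right (α - β₁) (β₂ - α)
  refine ⟨min (α - β₁) (β₂ - α),
    ⟨lt_min (by linarith [hβ₁.2]) (by linarith [hβ₂.1]), by linarith [hβ₁.1]⟩,
    by linarith [hβ₂.2], fun γ hγ ↦ ?_⟩
  obtain ⟨hγ₁, hγ₂⟩ := abs_le.1 hγ
  have hγ : 0 ≤ γ := by linarith [hβ₁.1]
  rcases le_total γ α with hγα | hαγ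
  · exact ⟨(w.cut_antitoneOn hβ₁.1.le hγ (by linarith)).trans h₁,
      (w.cut_antitoneOn hγ hα.1.le hγα).trans (self_subset_thickening hε _)⟩
  · exact ⟨(w.cut_antitoneOn hα.1.le hγ hαγ).trans (self_subset_thickening hε _),
      h₂.trans (thickening_subset_of_subset ε
        (w.cut_antitoneOn hγ (hα.1.trans hβ₂.1).le (by linarith)))⟩

theorem tendsto_hausdorffDist_cut_nhds (hw : w.IsFuzzyNumber) (hα : α ∈ Ioo 0 1)
    (hj : α ∉ w.jumpLevels) :
    Tendsto (fun γ ↦ hausdorffDist (w.cut γ) (w.cut α)) (𝓝 α) (𝓝 0) := by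
  rw [Metric.tendsto_nhds]
  intro ε hε
  obtain ⟨η, hη, -, hcut⟩ := exists_forall_cut_subset_thickening hw hα hj (half_pos hε)
  filter_upwards [closedBall_mem_nhds α hη.1] with γ hγ
  obtain ⟨h₁, h₂⟩ := hcut γ (by rwa [mem_closedBall, Real.dist_eq] at hγ)
  rw [Real.dist_eq, sub_zero, abs_of_nonneg hausdorffDist_nonneg]
  exact (hausdorffDist_le_of_subset_thickening (half_pos hε).le h₁ h₂).trans_lt (half_lt_self hε)

theorem continuousAt_hausdorffDist_cut (hv : v.IsFuzzyNumber) (hw : w.IsFuzzyNumber)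
    (hα : α ∈ Ioo 0 1) (hjv : α ∉ v.jumpLevels) (hjw : α ∉ w.jumpLevels) :
    ContinuousAt (fun γ ↦ hausdorffDist (v.cut γ) (w.cut γ)) α := by
  have hαI := Ioo_subset_Icc_self hα
  have hsum := (tendsto_hausdorffDist_cut_nhds hv hα hjv).add
    (tendsto_hausdorffDist_cut_nhds hw hα hjw)
  rw [add_zero] at hsum
  rw [ContinuousAt, tendsto_iff_dist_tendsto_zero]
  refine squeeze_zero' (Eventually.of_forall fun _ ↦ dist_nonneg) ?_ hsum
  filter_upwards [Icc_mem_nhds hα.1 hα.2] with γ hγ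
  exact abs_hausdorffDist_sub_hausdorffDist_le (hausdorffEDist_cut_ne_top hv hv hγ hαI)
    (hausdorffEDist_cut_ne_top hv hw hγ hγ)
    (hausdorffEDist_cut_ne_top hv hw hαI hαI)

theorem ae_mem_Ioo_and_notMem_jumpLevels (hw : w.IsFuzzyNumber) (μ : Measure ℝ)
    [NullSingletonClass μ] : ∀ᵐ α ∂μ, α ∈ Ioc 0 1 → α ∈ Ioo 0 1 ∧ α ∉ w.jumpLevels := by
  filter_upwards [((countable_jumpLevels hw).insert 1).ae_notMem μ] with α hα hαI
  rw [mem_insert_iff, not_or] at hα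
  exact ⟨⟨hαI.1, hαI.2.lt_of_ne hα.1⟩, hα.2⟩

theorem aestronglyMeasurable_hausdorffDist_cut (hv : v.IsFuzzyNumber) (hw : w.IsFuzzyNumber)
    (μ : Measure ℝ) [NullSingletonClass μ] :
    AEStronglyMeasurable (fun α ↦ hausdorffDist (v.cut α) (w.cut α)) (μ.restrict (Ioc 0 1)) := by
  refine aestronglyMeasurable_of_ae_continuousAt ((ae_restrict_iff' measurableSet_Ioc).2 ?_)
  filter_upwards [ae_mem_Ioo_and_notMem_jumpLevels hv μ, ae_mem_Ioo_and_notMem_jumpLevels hw μ]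
    with α hv' hw' hαI
  exact continuousAt_hausdorffDist_cut hv hw (hv' hαI).1 (hv' hαI).2 (hw' hαI).2

theorem hausdorffDist_cut_le_add_of_D_lt (hv : v.IsFuzzyNumber) (hw : w.IsFuzzyNumber)
    (hD : D v w < r) (hα : α ∈ Icc 0 1) (hrα : r ≤ α) (hαr : α + r ≤ 1) (hε : 0 ≤ ε)
    (h₁ : w.cut (α - r) ⊆ thickening ε (w.cut α)) (h₂ : w.cut α ⊆ thickening ε (w.cut (α + r))) :
    hausdorffDist (v.cut α) (w.cut α) ≤ r + ε := by
  have hr : 0 < r := hausdorffDist_nonneg.trans_lt hD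
  refine hausdorffDist_le_of_subset_thickening (by positivity) ?_ ?_
  · calc v.cut α ⊆ thickening r (w.cut (α - r)) :=
          cut_subset_thickening_cut_of_D_lt hv hw hD hα (by linarith) le_rfl
      _ ⊆ thickening r (thickening ε (w.cut α)) := thickening_subset_of_subset r h₁
      _ ⊆ thickening (r + ε) (w.cut α) := thickening_thickening_subset _ _ _
  · calc w.cut α ⊆ thickening ε (w.cut (α + r)) := h₂
      _ ⊆ thickening ε (thickening r (v.cut α)) :=
          thickening_subset_of_subset ε (cut_subset_thickening_cut_of_D_lt hw hv
            (D_comm v w ▸ hD) ⟨by linarith [hα.1], hαr⟩ hα.1 (by linarith))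
      _ ⊆ thickening (r + ε) (v.cut α) := add_comm ε r ▸ thickening_thickening_subset _ _ _

theorem tendsto_hausdorffDist_cut_of_tendsto_D {ι : Type*} {l : Filter ι}
    {v : ι → FuzzyNumber p} (hv : ∀ i, (v i).IsFuzzyNumber) (hw : w.IsFuzzyNumber)
    (hD : Tendsto (fun i ↦ D (v i) w) l (𝓝 0)) (hα : α ∈ Ioo 0 1) (hj : α ∉ w.jumpLevels) :
    Tendsto (fun i ↦ hausdorffDist ((v i).cut α) (w.cut α)) l (𝓝 0) := by
  rw [Metric.tendsto_nhds]
  intro ε hε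
  obtain ⟨η, hη, hη₁, hcut⟩ :=
    exists_forall_cut_subset_thickening hw hα hj (by positivity : 0 < ε / 3)
  obtain ⟨r, hr, hrη, hrε⟩ : ∃ r > 0, r ≤ η ∧ r ≤ ε / 3 :=
    ⟨min η (ε / 3), lt_min hη.1 (by positivity), min_le_left _ _, min_le_right _ _⟩
  filter_upwards [hD.eventually (gt_mem_nhds hr)] with i hi
  have hle := hausdorffDist_cut_le_add_of_D_lt (hv i) hw hi (Ioo_subset_Icc_self hα)
    (by linarith [hη.2]) (by linarith) (by positivity)
    (hcut _ (by simpa [abs_of_pos hr] using hrη)).1 (hcut _ (by simpa [abs_of_pos hr] using hrη)).2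
  rw [Real.dist_eq, sub_zero, abs_of_nonneg hausdorffDist_nonneg]
  linarith

end FuzzyNumber

open FuzzyNumber

theorem D_tendsto_imp_dq_tendsto (p : ℕ) (um : ℕ → FuzzyNumber p)
    (u : FuzzyNumber p) (hm : ∀ m, (um m).IsFuzzyNumber) (hu : u.IsFuzzyNumber)
    (h : Filter.Tendsto (fun m => FuzzyNumber.D (um m) u) Filter.atTop (nhds 0)) :
    ∀ q : ℝ, 1 ≤ q →
      Filter.Tendsto (fun m => FuzzyNumber.dq q (um m) u) Filter.atTop (nhds 0) := by
  intro q hq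
  have hq₀ : 0 < q := by linarith
  have hpow := Real.continuous_rpow_const hq₀.le
  have hint : Tendsto (fun m ↦ ∫ α in (0 : ℝ)..1, hausdorffDist ((um m).cut α) (u.cut α) ^ q)
      atTop (𝓝 (∫ _ in (0 : ℝ)..1, (0 : ℝ))) := by
    refine intervalIntegral.tendsto_integral_filter_of_dominated_convergence
      (fun _ ↦ (diam (u.cut 0) + 2 * 1) ^ q) ?_ ?_ intervalIntegrable_const ?_
    · rw [uIoc_of_le zero_le_one]
      exact Eventually.of_forall fun m ↦
        hpow.comp_aestronglyMeasurable (aestronglyMeasurable_hausdorffDist_cut (hm m) hu _)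
    · filter_upwards [h.eventually (gt_mem_nhds one_pos)] with m hm₁
      refine Eventually.of_forall fun α hα ↦ ?_
      rw [uIoc_of_le zero_le_one] at hα
      rw [Real.norm_of_nonneg (Real.rpow_nonneg hausdorffDist_nonneg q)]
      exact Real.rpow_le_rpow hausdorffDist_nonneg
        (hausdorffDist_cut_le_of_D_lt (hm m) hu hm₁ (Ioc_subset_Icc_self hα)) hq₀.le
    · filter_upwards [ae_mem_Ioo_and_notMem_jumpLevels hu volume] with α hα hαI
      rw [uIoc_of_le zero_le_one] at hαI
      have := (hpow.tendsto 0).comp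
        (tendsto_hausdorffDist_cut_of_tendsto_D hm hu h (hα hαI).1 (hα hαI).2)
      rwa [Real.zero_rpow hq₀.ne'] at this
  have hroot : Tendsto (fun y : ℝ ↦ y ^ (1 / q)) (𝓝 0) (𝓝 0) := by
    have := (Real.continuous_rpow_const (one_div_pos.2 hq₀).le).tendsto 0
    rwa [Real.zero_rpow (one_div_pos.2 hq₀).ne'] at this
  rw [intervalIntegral.integral_zero] at hint
  exact hroot.comp hint
end
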